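/- Let X be an affine variety over k with coordinate ring A. For each affine embedding ι : X ↪ A^m (given by generators f_1, ..., f_m of A) define the extended tropicalization Trop(X, ι) ⊆ R̄^m as the union over subsets I_0 ⊆ {1, ..., m} of the sets trop(X ∩ T^{I_0}), where X ∩ T^{I_0} is the closed subvariety of the torus T^{I_0} whose ideal consists of all Laurent polynomials in the variables x_i, i ∈ I_0, vanishing at every point of {y ∈ X(k) : y_i ≠ 0 if and only if i ∈ I_0}, trop is defined by the initial-form criterion with the trivial valuation (v lies in trop if for every nonzero f in the ideal the minimum of ⟨u, v⟩ over supp(f) is attained at least twice), and trop(X ∩ T^{I_0}) is embedded in the stratum ℝ^{I_0} = {v ∈ R̄^m : v_i < ∞ iff i ∈ I_0}; let π_ι : X^an → R̄^m be x ↦ (−log|f_1|_x, ..., −log|f_m|_x), with −log 0 = ∞. Then the induced map varprojlim π_ι is a homeomorphism from X^an onto varprojlim Trop(X, ι), the inverse limit of topological spaces taken over all affine embeddings ι with transition maps Trop(φ) for all equivariant morphisms φ between the ambient affine spaces that commute with the embeddings. -/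

import Mathlib

open scoped BigOperators Classical

noncomputable section

/-- The extended real line `R̄ = ℝ ∪ {∞}`. -/
abbrev Rbar : Type := WithTop ℝ

/-- The map `a ↦ exp (−a)`, sending `∞` to `0`. -/
def expNeg (t : Rbar) : ℝ := if h : t = ⊤ then 0 else Real.exp (-(t.untop h))

/-- The topology on `R̄` in which `ℝ` carries its usual topology and the completed rays
`(a, ∞]` are a basis of neighborhoods of `∞`; equivalently, the topology induced by the
injection `expNeg : R̄ → ℝ`, which is a homeomorphism onto `[0, ∞)`. -/
instance : TopologicalSpace Rbar := TopologicalSpace.induced expNeg inferInstance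

/-- `−log r`, with `−log 0 = ∞`. -/
def negLog (r : ℝ) : Rbar := if r = 0 then ⊤ else (((-Real.log r : ℝ)) : Rbar)

/-- `ν : K → ℝ ∪ {∞}` is a (nonarchimedean) valuation: `ν(0) = ∞`,
`ν(ab) = ν(a) + ν(b)`, and `ν(a + b) ≥ min (ν a) (ν b)`. -/
structure IsVal {K : Type} [Field K] (ν : K → Rbar) : Prop where
  map_zero : ν 0 = ⊤
  map_mul : ∀ a b : K, ν (a * b) = ν a + ν b
  min_le_add : ∀ a b : K, min (ν a) (ν b) ≤ ν (a + b)

/-- The valuation `ν` is nontrivial: `ν(K*) ≠ {0}`. -/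
def IsNontrivialVal {K : Type} [Field K] (ν : K → Rbar) : Prop :=
  ∃ a : K, a ≠ 0 ∧ ν a ≠ 0

/-- The trivial valuation on a field `k`: `ν(a) = 0` for `a ≠ 0` and `ν(0) = ∞`. -/
def nuTriv (k : Type) [Field k] : k → Rbar := fun a => if a = 0 then ⊤ else 0

/-- `K` is complete with respect to the valuation `ν`, i.e. with respect to the induced
nonarchimedean absolute value `expNeg ∘ ν`: every Cauchy sequence converges. -/
def VComplete {K : Type} [Field K] (ν : K → Rbar) : Prop :=
  ∀ s : ℕ → K,
    (∀ ε : ℝ, 0 < ε → ∃ N : ℕ, ∀ p ≥ N, ∀ q ≥ N, expNeg (ν (s p - s q)) < ε) →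
    ∃ L : K, ∀ ε : ℝ, 0 < ε → ∃ N : ℕ, ∀ p ≥ N, expNeg (ν (s p - L)) < ε

/-- A multiplicative seminorm on a commutative ring `A`: a nonnegative real-valued
function with `|0| = 0`, `|1| = 1`, `|fg| = |f|·|g|` and `|f + g| ≤ |f| + |g|`. -/
structure IsMultSeminorm {A : Type} [CommRing A] (p : A → ℝ) : Prop where
  nonneg : ∀ f, 0 ≤ p f
  map_zero : p 0 = 0
  map_one : p 1 = 1
  map_mul : ∀ f g, p (f * g) = p f * p g
  add_le : ∀ f g, p (f + g) ≤ p f + p g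

/-- A seminorm on the `K`-algebra `A` is compatible with `ν` if `|a| = exp(−ν(a))` for
every scalar `a ∈ K`. -/
def Compat {K A : Type} [Field K] [CommRing A] [Algebra K A] (ν : K → Rbar) (p : A → ℝ) :
    Prop :=
  ∀ a : K, p (algebraMap K A a) = expNeg (ν a)

/-- The analytification `X^an` of the affine variety `X = Spec A` over the complete
nonarchimedean field `(K, ν)`: the set of multiplicative seminorms on `A` compatible with
`ν`, topologized (as a subset of `A → ℝ` with the product topology) by the coarsest
topology making `x ↦ |f|_x` continuous for every `f ∈ A`. -/
def Xan (K A : Type) [Field K] [CommRing A] [Algebra K A] (ν : K → Rbar) : Set (A → ℝ) :=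
  {p | IsMultSeminorm p ∧ Compat ν p}

/-- The analytification `X^an` over a trivially valued field `k`: the set of
multiplicative seminorms on `A` that are equal to `1` on `k*`, with the topology of
pointwise convergence. -/
def XanTriv (k A : Type) [Field k] [CommRing A] [Algebra k A] : Set (A → ℝ) :=
  {p | IsMultSeminorm p ∧ ∀ a : k, a ≠ 0 → p (algebraMap k A a) = 1}

/-- The projection `π_ι : X^an → R̄^m` attached to the affine embedding `ι` given by the
generators `f 0, ..., f (m-1)` of `A`: `x ↦ (−log|f 0|_x, ..., −log|f (m-1)|_x)`. -/
def piIota {K A : Type} [Field K] [CommRing A] [Algebra K A] (ν : K → Rbar) {m : ℕ}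
    (f : Fin m → A) (x : ↥(Xan K A ν)) : Fin m → Rbar :=
  fun i => negLog (x.1 (f i))

/-- The projection `π_ι : X^an → R̄^m` for a trivially valued base field. -/
def piIotaTriv {k A : Type} [Field k] [CommRing A] [Algebra k A] {m : ℕ}
    (f : Fin m → A) (x : ↥(XanTriv k A)) : Fin m → Rbar :=
  fun i => negLog (x.1 (f i))

/-- The tropicalization `Trop(X, ι)` of the affine embedding `ι : X ↪ A^m` of
`X = Spec A` given by the generators `f` of `A`: the closure in `R̄^m` of the set of
coordinatewise valuations of the `K`-points of `X`. -/
def TropX {K A : Type} [Field K] [CommRing A] [Algebra K A] (ν : K → Rbar) {m : ℕ}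
    (f : Fin m → A) : Set (Fin m → Rbar) :=
  closure {v | ∃ φ : A →ₐ[K] K, v = fun i => ν (φ (f i))}

/-- The tropicalization `Trop(φ) : R̄^m → R̄^n` of the equivariant morphism
`φ : A^m → A^n` whose coordinates are `y_j ↦ c_j · x^{a_j}`, namely
`v ↦ (ν(c_1) + ⟨a_1, v⟩, ..., ν(c_n) + ⟨a_n, v⟩)`, with the conventions `ν(0) = ∞`,
`∞ + t = ∞`, `a_i · ∞ = ∞` for `a_i > 0`, and `0 · ∞ = 0`. -/
def tropMap {K : Type} [Field K] (ν : K → Rbar) {m n : ℕ} (c : Fin n → K)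
    (a : Fin n → Fin m → ℕ) (v : Fin m → Rbar) : Fin n → Rbar :=
  fun j => ν (c j) + ∑ i, (a j i) • v i

/-- The affine embeddings of `X = Spec A`: an embedding `ι : X ↪ A^m` is a tuple of
generators of `A` as a `K`-algebra. -/
def AffEmb (K A : Type) [Field K] [CommRing A] [Algebra K A] : Type :=
  Σ m : ℕ, {f : Fin m → A // Algebra.adjoin K (Set.range f) = ⊤}

/-- The map `X^an → Π_ι R̄^{m(ι)}`, `x ↦ (π_ι(x))_ι`, over all affine embeddings `ι`. -/
def bigMap (K A : Type) [Field K] [CommRing A] [Algebra K A] (ν : K → Rbar)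
    (x : ↥(Xan K A ν)) : ∀ e : AffEmb K A, Fin e.1 → Rbar :=
  fun e => piIota ν e.2.1 x

/-- The inverse limit `varprojlim Trop(X, ι)`, realized inside `Π_ι R̄^{m(ι)}`: families
`(y_ι)` with `y_ι ∈ Trop(X, ι)` for all `ι` and `y_ȷ = Trop(φ)(y_ι)` for every
equivariant morphism `φ : A^{m(ι)} → A^{m(ȷ)}` with `ȷ = φ ∘ ι`. -/
def limitSet (K A : Type) [Field K] [CommRing A] [Algebra K A] (ν : K → Rbar) :
    Set (∀ e : AffEmb K A, Fin e.1 → Rbar) :=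
  {y | (∀ e : AffEmb K A, y e ∈ TropX ν e.2.1) ∧
    ∀ (e e' : AffEmb K A) (c : Fin e'.1 → K) (a : Fin e'.1 → Fin e.1 → ℕ),
      (∀ j, e'.2.1 j = algebraMap K A (c j) * ∏ i, (e.2.1 i) ^ (a j i)) →
      y e' = tropMap ν c a (y e)}

/-- The ring of Laurent polynomials `K[x_1^{±1}, ..., x_m^{±1}]`, i.e. the group algebra
of `ℤ^m` over `K`. -/
abbrev Laur (K : Type) [Field K] (m : ℕ) : Type := AddMonoidAlgebra K (Fin m → ℤ)

/-- Evaluation of a Laurent polynomial at a point `y ∈ K^m` (meaningful when the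
relevant coordinates of `y` are invertible). -/
def lEval {K : Type} [Field K] {m : ℕ} (y : Fin m → K) (g : Laur K m) : K :=
  ∑ u ∈ g.coeff.support, g.coeff u * ∏ i, (y i) ^ (u i)

/-- The tropical minimum of the Laurent polynomial `f` at `v ∈ ℝ^m` is attained twice:
the minimum of `ν(a_u) + ⟨u, v⟩` over `u ∈ supp(f)` is achieved by at least two distinct
`u ∈ supp(f)`.  (Equivalently, the initial form of `f` at `v` is not a monomial.) -/
def MinTwice {K : Type} [Field K] {m : ℕ} (ν : K → Rbar) (f : Laur K m) (v : Fin m → ℝ) :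
    Prop :=
  ∃ u ∈ f.coeff.support, ∃ u' ∈ f.coeff.support, u ≠ u' ∧
    ν (f.coeff u) + ((∑ i, (u i : ℝ) * v i : ℝ) : Rbar)
      = ν (f.coeff u') + ((∑ i, (u' i : ℝ) * v i : ℝ) : Rbar) ∧
    ∀ w ∈ f.coeff.support,
      ν (f.coeff u) + ((∑ i, (u i : ℝ) * v i : ℝ) : Rbar)
        ≤ ν (f.coeff w) + ((∑ i, (w i : ℝ) * v i : ℝ) : Rbar)

/-- With the trivial valuation: the minimum of `⟨u, w⟩` over `supp g` is attained by at
least two distinct `u ∈ supp g`. -/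
def MinTwiceTriv {k : Type} [Field k] {m : ℕ} (g : Laur k m) (w : Fin m → ℝ) : Prop :=
  ∃ u ∈ g.coeff.support, ∃ u' ∈ g.coeff.support, u ≠ u' ∧
    (∑ i, (u i : ℝ) * w i) = (∑ i, (u' i : ℝ) * w i) ∧
    ∀ z ∈ g.coeff.support, (∑ i, (u i : ℝ) * w i) ≤ ∑ i, (z i : ℝ) * w i

/-- The tropicalization `T_trop(J)` of an ideal of Laurent polynomials: the set of
`v ∈ ℝ^m` such that for every nonzero `f ∈ J` the tropical minimum of `f` at `v` is
attained twice. -/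
def Ttrop {K : Type} [Field K] {m : ℕ} (ν : K → Rbar) (J : Ideal (Laur K m)) :
    Set (Fin m → ℝ) :=
  {v | ∀ f ∈ J, f ≠ 0 → MinTwice ν f v}

/-- The `K`-points of the closed subvariety of the torus `T^m` cut out by the ideal `I`:
points of `(K*)^m` at which every element of `I` vanishes. -/
def torusPoints {K : Type} [Field K] {m : ℕ} (I : Ideal (Laur K m)) :
    Set (Fin m → Kˣ) :=
  {y | ∀ f ∈ I, lEval (fun i => (y i : K)) f = 0}

/-- The real number `ν(a)` (with junk value `0` when `ν(a) = ∞`, i.e. when `a = 0`). -/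
def vR {K : Type} [Field K] (ν : K → Rbar) (a : K) : ℝ := (ν a).untopD 0

/-- The set `{trop(y) : y ∈ X(K)} ⊆ ℝ^m` of coordinatewise valuations of the `K`-points
of the closed subvariety of the torus cut out by `I`; `trop(X)` is its closure. -/
def tropImg {K : Type} [Field K] {m : ℕ} (ν : K → Rbar) (I : Ideal (Laur K m)) :
    Set (Fin m → ℝ) :=
  {w | ∃ y ∈ torusPoints I, w = fun i => vR ν ((y i : Kˣ) : K)}

/-- The `K`-points of the closed subvariety of `A^m` cut out by the ideal `J`. -/
def affPoints {K : Type} [Field K] {m : ℕ} (J : Ideal (MvPolynomial (Fin m) K)) :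
    Set (Fin m → K) :=
  {y | ∀ f ∈ J, MvPolynomial.eval y f = 0}

/-- The extended tropicalization in `R̄^m` of a set of points of `A^m(K)`: the closure of
the set of coordinatewise valuations. -/
def TropAff {K : Type} [Field K] {m : ℕ} (ν : K → Rbar) (S : Set (Fin m → K)) :
    Set (Fin m → Rbar) :=
  closure {v | ∃ y ∈ S, v = fun i => ν (y i)}

/-- The coefficientwise extension map
`k[x_1^{±1}, ..., x_m^{±1}] → K[x_1^{±1}, ..., x_m^{±1}]` along `algebraMap k K`. -/
def laurExt (k K : Type) [Field k] [Field K] [Algebra k K] (m : ℕ) :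
    Laur k m →ₐ[k] Laur K m :=
  (AddMonoidAlgebra.lift (R := k) (M := Fin m → ℤ) (A := Laur K m)) (AddMonoidAlgebra.of K (Fin m → ℤ))

/-- The `i`-th coordinate function `x_i` in the coordinate ring
`k[X] = k[x_1^{±1}, ..., x_m^{±1}] / I` of a closed subvariety of the torus. -/
def coordLaur {k : Type} [Field k] {m : ℕ} (I : Ideal (Laur k m)) (i : Fin m) :
    Laur k m ⧸ I :=
  Ideal.Quotient.mk I (AddMonoidAlgebra.single (Pi.single i (1 : ℤ)) (1 : k))

/-- The projection `π : X^an → ℝ^m`, `x ↦ (−log|x_1|_x, ..., −log|x_m|_x)`, for a closed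
subvariety of the torus over a trivially valued field. -/
def piTorus {k : Type} [Field k] {m : ℕ} (I : Ideal (Laur k m))
    (x : ↥(XanTriv k (Laur k m ⧸ I))) : Fin m → ℝ :=
  fun i => -Real.log (x.1 (coordLaur I i))

/-- `trop(X)` for a closed subvariety of the torus over a trivially valued field: the
set of `v ∈ ℝ^m` such that for every nonzero `f ∈ I` the minimum of `⟨u, v⟩` over
`supp f` is attained at least twice. -/
def tropTrivTorus {k : Type} [Field k] {m : ℕ} (I : Ideal (Laur k m)) :
    Set (Fin m → ℝ) :=
  {v | ∀ f ∈ I, f ≠ 0 → MinTwiceTriv f v}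

/-- The vanishing ideal of `X ∩ T^{I₀}` for the affine embedding of `X = Spec A` given
by generators `f`: Laurent polynomials in the variables `x_i`, `i ∈ I₀` (support
condition), vanishing at every `k`-point `y` of `X` with `y_i ≠ 0` iff `i ∈ I₀`. -/
def stratVanishing (k A : Type) [Field k] [CommRing A] [Algebra k A] {m : ℕ}
    (f : Fin m → A) (I0 : Finset (Fin m)) : Set (Laur k m) :=
  {g | (∀ u ∈ g.coeff.support, ∀ i, i ∉ I0 → u i = 0) ∧
    ∀ φ : A →ₐ[k] k, (∀ i, φ (f i) ≠ 0 ↔ i ∈ I0) → lEval (fun i => φ (f i)) g = 0}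

/-- The extended tropicalization `Trop(X, ι) ⊆ R̄^m` over a trivially valued field: the
union over `I₀ ⊆ {1, ..., m}` of the sets `trop(X ∩ T^{I₀})`, each embedded in the
stratum `ℝ^{I₀} = {v : v_i < ∞ iff i ∈ I₀}` (coordinates `∞` off `I₀`). -/
def TropStrat (k A : Type) [Field k] [CommRing A] [Algebra k A] {m : ℕ}
    (f : Fin m → A) : Set (Fin m → Rbar) :=
  {v | ∃ (I0 : Finset (Fin m)) (w : Fin m → ℝ),
        (v = fun i => if i ∈ I0 then ((w i : ℝ) : Rbar) else ⊤) ∧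
        ∀ g ∈ stratVanishing k A f I0, g ≠ 0 → MinTwiceTriv g w}

/-- The map `X^an → Π_ι R̄^{m(ι)}` over a trivially valued field. -/
def bigMapTriv (k A : Type) [Field k] [CommRing A] [Algebra k A]
    (x : ↥(XanTriv k A)) : ∀ e : AffEmb k A, Fin e.1 → Rbar :=
  fun e => piIotaTriv e.2.1 x

/-- The inverse limit `varprojlim Trop(X, ι)` over a trivially valued field, realized
inside `Π_ι R̄^{m(ι)}`. -/
def limitSetTriv (k A : Type) [Field k] [CommRing A] [Algebra k A] :
    Set (∀ e : AffEmb k A, Fin e.1 → Rbar) :=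
  {y | (∀ e : AffEmb k A, y e ∈ TropStrat k A e.2.1) ∧
    ∀ (e e' : AffEmb k A) (c : Fin e'.1 → k) (a : Fin e'.1 → Fin e.1 → ℕ),
      (∀ j, e'.2.1 j = algebraMap k A (c j) * ∏ i, (e.2.1 i) ^ (a j i)) →
      y e' = tropMap (nuTriv k) c a (y e)}

/-!
A point `x` of `X^an` is recovered from its tropical images: `|f|_x = exp (-y_ι(f))` for any
embedding `ι` having `f` as a coordinate, and this formula is continuous in the family `y`, so
`x ↦ (π_ι x)_ι` has a continuous left inverse. Conversely, a compatible family `y` defines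
`|f| := exp (-y_ι(f))` independently of `ι`; compatibility with the monomial maps makes it
multiplicative and equal to `1` on `k*`, and the triangle inequality is the tropicalization of the
relation `x₃ = x₁ + x₂` in an embedding with coordinates `f`, `g`, `f + g`.

That the image lies in `Trop(X, ι)` rests on two facts. A seminorm trivial on `k*` is
nonarchimedean, so if the tropical minimum of a Laurent polynomial in the ideal of the stratum of
`x` were attained only once, clearing denominators would give an element of `A` of positive
seminorm at `x`. But that element vanishes on the `k`-points of the stratum, so by the
Nullstellensatz it lies in the radical of the ideal generated by the coordinates vanishing at
`x`, hence has seminorm `0`.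
-/

@[simp] lemma expNeg_top : expNeg ⊤ = 0 := by simp [expNeg]

@[simp] lemma expNeg_coe (r : ℝ) : expNeg r = Real.exp (-r) := by simp [expNeg]

@[simp] lemma expNeg_zero : expNeg 0 = 1 := by simpa using expNeg_coe 0

lemma expNeg_nonneg (t : Rbar) : 0 ≤ expNeg t := by
  induction t using WithTop.recTopCoe <;> simp [Real.exp_nonneg]

lemma expNeg_add (s t : Rbar) : expNeg (s + t) = expNeg s * expNeg t := by
  induction s using WithTop.recTopCoe <;> induction t using WithTop.recTopCoe <;>
    simp [← WithTop.coe_add, Real.exp_add, mul_comm]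

lemma expNeg_nsmul (n : ℕ) (t : Rbar) : expNeg (n • t) = expNeg t ^ n := by
  induction n with
  | zero => simp
  | succ n ih => rw [succ_nsmul, expNeg_add, ih, pow_succ]

lemma expNeg_sum {ι : Type*} (s : Finset ι) (t : ι → Rbar) :
    expNeg (∑ i ∈ s, t i) = ∏ i ∈ s, expNeg (t i) := by
  classical
  induction s using Finset.induction_on with
  | empty => simp
  | insert i s hi ih => rw [Finset.sum_insert hi, Finset.prod_insert hi, expNeg_add, ih]

lemma expNeg_antitone : Antitone expNeg := by
  intro s t hst
  induction t using WithTop.recTopCoe with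
  | top => simp [expNeg_nonneg]
  | coe b =>
    lift s to ℝ using ne_top_of_le_ne_top WithTop.coe_ne_top hst
    simpa using WithTop.coe_le_coe.1 hst

lemma negLog_expNeg (t : Rbar) : negLog (expNeg t) = t := by
  induction t using WithTop.recTopCoe <;> simp [negLog, Real.exp_ne_zero]

lemma expNeg_negLog {r : ℝ} (hr : 0 ≤ r) : expNeg (negLog r) = r := by
  rcases hr.eq_or_lt with rfl | hr
  · simp [negLog]
  · rw [negLog, if_neg hr.ne', expNeg_coe, neg_neg, Real.exp_log hr]

lemma expNeg_nuTriv_of_ne_zero {k : Type} [Field k] {a : k} (ha : a ≠ 0) :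
    expNeg (nuTriv k a) = 1 := by
  simp [nuTriv, ha]

namespace IsMultSeminorm

variable {A : Type} [CommRing A] {p : A → ℝ}

lemma map_neg (hp : IsMultSeminorm p) (f : A) : p (-f) = p f := by
  have h1 : p (-1) = 1 := by
    have hsq : p (-1) ^ 2 = 1 := by rw [sq, ← hp.map_mul, neg_one_mul, neg_neg, hp.map_one]
    nlinarith [hp.nonneg (-1)]
  rw [← neg_one_mul, hp.map_mul, h1, one_mul]

def toMulRingSeminorm (hp : IsMultSeminorm p) : MulRingSeminorm A where
  toFun := p
  map_zero' := hp.map_zero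
  add_le' := hp.add_le
  neg' := hp.map_neg
  map_one' := hp.map_one
  map_mul' := hp.map_mul

@[simp] lemma coe_toMulRingSeminorm (hp : IsMultSeminorm p) : ⇑hp.toMulRingSeminorm = p := rfl

def ker (hp : IsMultSeminorm p) : Ideal A where
  carrier := {a | p a = 0}
  add_mem' {a b} ha hb := le_antisymm (by simpa [ha.out, hb.out] using hp.add_le a b) (hp.nonneg _)
  zero_mem' := hp.map_zero
  smul_mem' c a ha := by simp [hp.map_mul, ha.out]

lemma mem_ker (hp : IsMultSeminorm p) {a : A} : a ∈ hp.ker ↔ p a = 0 := Iff.rfl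

lemma ker_isPrime (hp : IsMultSeminorm p) : hp.ker.IsPrime := by
  refine (Ideal.isPrime_iff).2 ⟨fun h => ?_, fun {a b} hab => ?_⟩
  · simpa [hp.mem_ker, hp.map_one] using (Ideal.eq_top_iff_one _).1 h
  · simpa [hp.mem_ker, hp.map_mul] using hab

end IsMultSeminorm

lemma le_of_forall_pow_le_succ_mul_pow {c M : ℝ} (hM : 0 ≤ M)
    (h : ∀ n : ℕ, c ^ n ≤ (n + 1) * M ^ n) : c ≤ M := by
  refine le_of_forall_gt_imp_ge_of_dense fun a ha => ?_
  set M' := max M (a / 2)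
  have hM' : 0 < M' := lt_max_of_lt_right (by linarith)
  obtain ⟨n, hn⟩ := Real.exists_natCast_add_one_lt_pow_of_one_lt
    ((one_lt_div hM').2 (max_lt ha (by linarith)))
  rw [div_pow, lt_div_iff₀ (by positivity)] at hn
  have hcn : c ^ n < a ^ n := (h n).trans_lt <| (mul_le_mul_of_nonneg_left
    (pow_le_pow_left₀ hM (le_max_left _ _) n) (by positivity)).trans_lt hn
  exact (lt_of_pow_lt_pow_left₀ n (by linarith) hcn).le

section Laurent

variable {k : Type} [Field k] {m : ℕ}

lemma minTwiceTriv_iff_forall_exists_ne_le {g : Laur k m} (hg : g ≠ 0) {w : Fin m → ℝ} :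
    MinTwiceTriv g w ↔ ∀ u ∈ g.coeff.support, ∃ u' ∈ g.coeff.support, u' ≠ u ∧
      ∑ i, (u' i : ℝ) * w i ≤ ∑ i, (u i : ℝ) * w i := by
  constructor
  · rintro ⟨a, ha, a', ha', hne, heq, hmin⟩ u hu
    by_cases hau : a = u
    · exact ⟨a', ha', hau ▸ hne.symm, heq ▸ hmin u hu⟩
    · exact ⟨a, ha, hau, hmin u hu⟩
  · intro h
    have hsupp : g.coeff.support.Nonempty := by simpa [AddMonoidAlgebra.coeff_eq_zero] using hg
    obtain ⟨u, hu, hmin⟩ := Finset.exists_min_image _ (fun u => ∑ i, (u i : ℝ) * w i) hsupp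
    obtain ⟨u', hu', hne, hle⟩ := h u hu
    exact ⟨u, hu, u', hu', hne.symm, (hle.antisymm (hmin u' hu')).symm, hmin⟩

lemma lEval_eq_sum (y : Fin m → k) (g : Laur k m) :
    lEval y g = g.coeff.sum fun u a => a * ∏ i, y i ^ u i := rfl

lemma lEval_add (y : Fin m → k) (p q : Laur k m) : lEval y (p + q) = lEval y p + lEval y q := by
  simp only [lEval_eq_sum, AddMonoidAlgebra.coeff_add]
  exact Finsupp.sum_add_index' (fun _ => zero_mul _) fun _ _ _ => add_mul _ _ _

lemma lEval_single (y : Fin m → k) (u : Fin m → ℤ) (c : k) :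
    lEval y (AddMonoidAlgebra.single u c) = c * ∏ i, y i ^ u i := by
  rw [lEval_eq_sum, AddMonoidAlgebra.coeff_single]
  exact Finsupp.sum_single_index (zero_mul _)

lemma lEval_single_pi_single (y : Fin m → k) (j : Fin m) (c : k) :
    lEval y (AddMonoidAlgebra.single (Pi.single j 1) c) = c * y j := by
  rw [lEval_single]
  simp [Pi.single_apply]

lemma sum_pi_single_mul (w : Fin m → ℝ) (j : Fin m) :
    ∑ i, ((Pi.single j (1 : ℤ) : Fin m → ℤ) i : ℝ) * w i = w j := by
  simp [Pi.single_apply]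

end Laurent

lemma Real.exp_sum_intCast_mul_log {ι : Type*} (s : Finset ι) (u : ι → ℤ) (r : ι → ℝ)
    (hr : ∀ i ∈ s, u i ≠ 0 → 0 < r i) :
    Real.exp (∑ i ∈ s, (u i : ℝ) * Real.log (r i)) = ∏ i ∈ s, r i ^ u i := by
  rw [Real.exp_sum]
  refine Finset.prod_congr rfl fun i hi => ?_
  by_cases hui : u i = 0
  · simp [hui]
  · rw [mul_comm, ← Real.rpow_def_of_pos (hr i hi hui), Real.rpow_intCast]

/-- `∏ i ∈ s, f i ^ (u i + N)` is the Laurent monomial `f ^ u` with its denominators cleared by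
`(∏ i ∈ s, f i) ^ N`. -/
lemma map_prod_pow_toNat_add {ι A G₀ F : Type*} [Fintype ι] [CommMonoid A] [CommGroupWithZero G₀]
    [FunLike F A G₀] [MonoidHomClass F A G₀] (χ : F) (f : ι → A) {s : Finset ι}
    (hf : ∀ i ∈ s, χ (f i) ≠ 0) {u : ι → ℤ} (hsupp : ∀ i ∉ s, u i = 0) {N : ℕ}
    (hN : ∀ i, 0 ≤ u i + N) :
    χ (∏ i ∈ s, f i ^ (u i + N).toNat) = (∏ i, χ (f i) ^ u i) * (∏ i ∈ s, χ (f i)) ^ N := by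
  have hpow : ∀ i ∈ s, χ (f i ^ (u i + N).toNat) = χ (f i) ^ u i * χ (f i) ^ N := fun i hi => by
    rw [map_pow, ← zpow_natCast, Int.toNat_of_nonneg (hN i), zpow_add₀ (hf i hi), zpow_natCast]
  rw [map_prod, Finset.prod_congr rfl hpow, Finset.prod_mul_distrib, Finset.prod_pow,
    Finset.prod_subset (Finset.subset_univ s) fun i _ hi => by rw [hsupp i hi, zpow_zero]]

lemma exists_nat_forall_zero_le_add {ι : Type*} [Fintype ι] (s : Finset (ι → ℤ)) :
    ∃ N : ℕ, ∀ u ∈ s, ∀ i, 0 ≤ u i + N := by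
  refine ⟨s.sup fun u => Finset.univ.sup fun i => (u i).natAbs, fun u hu i => ?_⟩
  have hi : (u i).natAbs ≤ s.sup fun u => Finset.univ.sup fun i => (u i).natAbs :=
    (Finset.le_sup (f := fun i => (u i).natAbs) (Finset.mem_univ i)).trans
      (Finset.le_sup (f := fun u => Finset.univ.sup fun i => (u i).natAbs) hu)
  omega

section Nullstellensatz

variable {k A : Type} [Field k] [CommRing A] [Algebra k A]

lemma aeval_surjective_of_adjoin_eq_top {m : ℕ} {f : Fin m → A}
    (hgen : Algebra.adjoin k (Set.range f) = ⊤) :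
    Function.Surjective (MvPolynomial.aeval (R := k) f) := by
  rw [← AlgHom.range_eq_top, ← Algebra.adjoin_range_eq_range_aeval]
  exact hgen

lemma mem_radical_span_of_forall_algHom [IsAlgClosed k] {m : ℕ} {f : Fin m → A}
    (hgen : Algebra.adjoin k (Set.range f) = ⊤) (S : Set (Fin m)) {h : A}
    (hvan : ∀ φ : A →ₐ[k] k, (∀ i ∈ S, φ (f i) = 0) → φ h = 0) :
    h ∈ (Ideal.span (f '' S)).radical := by
  set π := MvPolynomial.aeval (R := k) f
  have hπ : Function.Surjective π := aeval_surjective_of_adjoin_eq_top hgen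
  obtain ⟨H, rfl⟩ := hπ h
  set J := RingHom.ker π ⊔ Ideal.span (MvPolynomial.X '' S)
  have hH : H ∈ J.radical := by
    rw [← MvPolynomial.vanishingIdeal_zeroLocus_eq_radical (K := k)]
    intro y hy
    have hker : RingHom.ker π.toRingHom ≤ RingHom.ker (MvPolynomial.aeval (R := k) y).toRingHom :=
      fun Q hQ => hy Q (Ideal.mem_sup_left hQ)
    set φ := π.liftOfSurjective hπ _ hker
    have hφ (Q) : φ (π Q) = MvPolynomial.aeval y Q := π.liftOfSurjective_apply hπ _ hker Q
    rw [← hφ]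
    refine hvan φ fun i hi => ?_
    rw [← MvPolynomial.aeval_X (R := k) f i, hφ]
    exact hy _ (Ideal.mem_sup_right (Ideal.subset_span ⟨i, hi, rfl⟩))
  have hJ : J.map π = Ideal.span (f '' S) := by
    rw [Ideal.map_sup, (Ideal.map_eq_bot_iff_le_ker π).2 le_rfl, bot_sup_eq, Ideal.map_span,
      Set.image_image]
    simp [π]
  exact hJ ▸ Ideal.map_radical_le π (Ideal.mem_map_of_mem π hH)

end Nullstellensatz

section XanTriv

variable {k A : Type} [Field k] [CommRing A] [Algebra k A] {x : A → ℝ}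

lemma apply_natCast_le_one_of_mem_xanTriv (hx : x ∈ XanTriv k A) (n : ℕ) : x n ≤ 1 := by
  rw [← map_natCast (algebraMap k A)]
  by_cases hn : (n : k) = 0
  · simp [hn, hx.1.map_zero]
  · exact (hx.2 _ hn).le

/-- Expanding `(f + g) ^ n` bounds `|f + g| ^ n` by `(n + 1) max(|f|, |g|) ^ n`, since
`|binomial coefficient| ≤ 1` for the trivial valuation. -/
lemma isNonarchimedean_of_mem_xanTriv (hx : x ∈ XanTriv k A) : IsNonarchimedean x := by
  intro f g
  set χ := hx.1.toMulRingSeminorm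
  set M := max (x f) (x g)
  refine le_of_forall_pow_le_succ_mul_pow ((hx.1.nonneg f).trans (le_max_left _ _)) fun n => ?_
  have hterm : ∀ i ∈ Finset.range (n + 1),
      χ (f ^ i * g ^ (n - i) * (n.choose i : A)) ≤ M ^ n := by
    intro i hi
    have hin : i ≤ n := Nat.lt_succ_iff.1 (Finset.mem_range.1 hi)
    calc χ (f ^ i * g ^ (n - i) * (n.choose i : A))
        = x f ^ i * x g ^ (n - i) * x (n.choose i : A) := by
          rw [map_mul, map_mul, map_pow, map_pow]; rfl
      _ ≤ M ^ i * M ^ (n - i) * 1 := by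
        have hM : 0 ≤ M := (hx.1.nonneg f).trans (le_max_left _ _)
        gcongr
        all_goals first
          | exact hx.1.nonneg _ | exact le_max_left _ _ | exact le_max_right _ _
          | exact pow_nonneg (hx.1.nonneg _) _ | exact apply_natCast_le_one_of_mem_xanTriv hx _
      _ = M ^ n := by rw [mul_one, ← pow_add, Nat.add_sub_cancel' hin]
  calc x (f + g) ^ n = χ (∑ i ∈ Finset.range (n + 1), f ^ i * g ^ (n - i) * (n.choose i : A)) := by
        rw [← add_pow, map_pow]; rfl
    _ ≤ ∑ i ∈ Finset.range (n + 1), χ (f ^ i * g ^ (n - i) * (n.choose i : A)) :=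
        Finset.le_sum_of_subadditive χ (map_zero χ).le (map_add_le_add χ) _ _
    _ ≤ ∑ _i ∈ Finset.range (n + 1), M ^ n := Finset.sum_le_sum hterm
    _ = (n + 1) * M ^ n := by simp

/-- `h * ∏ i ∈ I₀, f i` vanishes wherever the `f i`, `i ∉ I₀`, do; by the Nullstellensatz it lies in
the radical of the ideal they generate, which is contained in the prime ideal `{x = 0}`. -/
lemma apply_eq_zero_of_forall_stratum [IsAlgClosed k] (hx : x ∈ XanTriv k A) {m : ℕ}
    {f : Fin m → A} (hgen : Algebra.adjoin k (Set.range f) = ⊤) {I0 : Finset (Fin m)}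
    (hI0 : ∀ i, x (f i) ≠ 0 ↔ i ∈ I0) {h : A}
    (hvan : ∀ φ : A →ₐ[k] k, (∀ i, φ (f i) ≠ 0 ↔ i ∈ I0) → φ h = 0) : x h = 0 := by
  have hmem : h * ∏ i ∈ I0, f i ∈ (Ideal.span (f '' (↑I0)ᶜ)).radical := by
    refine mem_radical_span_of_forall_algHom hgen _ fun φ hφ => ?_
    by_cases hstrat : ∀ i ∈ I0, φ (f i) ≠ 0
    · have hφI0 (i : Fin m) : φ (f i) ≠ 0 ↔ i ∈ I0 :=
        ⟨fun hi => by_contra fun hi' => hi (hφ i hi'), hstrat i⟩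
      rw [map_mul, hvan φ hφI0, zero_mul]
    · push Not at hstrat
      obtain ⟨i, hi, hφi⟩ := hstrat
      rw [map_mul, map_prod, Finset.prod_eq_zero hi hφi, mul_zero]
  have hker : (Ideal.span (f '' (↑I0)ᶜ)).radical ≤ hx.1.ker := by
    rw [← hx.1.ker_isPrime.radical]
    refine Ideal.radical_mono (Ideal.span_le.2 ?_)
    rintro _ ⟨i, hi, rfl⟩
    exact not_not.1 fun h => hi ((hI0 i).1 h)
  refine (hx.1.ker_isPrime.mem_or_mem (hker hmem)).resolve_right fun hP => ?_
  rw [hx.1.mem_ker, ← hx.1.coe_toMulRingSeminorm, map_prod] at hP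
  obtain ⟨i, hi, hxi⟩ := Finset.prod_eq_zero_iff.1 hP
  exact (hI0 i).2 hi hxi

lemma minTwiceTriv_of_mem_stratVanishing [IsAlgClosed k] (hx : x ∈ XanTriv k A) {m : ℕ}
    {f : Fin m → A} (hgen : Algebra.adjoin k (Set.range f) = ⊤) {I0 : Finset (Fin m)}
    (hI0 : ∀ i, x (f i) ≠ 0 ↔ i ∈ I0) {g : Laur k m} (hg : g ∈ stratVanishing k A f I0)
    (hg0 : g ≠ 0) : MinTwiceTriv g fun i => -Real.log (x (f i)) := by
  rw [minTwiceTriv_iff_forall_exists_ne_le hg0]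
  by_contra! hmin
  obtain ⟨u0, hu0, hlt⟩ := hmin
  obtain ⟨N, hN⟩ := exists_nat_forall_zero_le_add g.coeff.support
  set χ := hx.1.toMulRingSeminorm
  set term : (Fin m → ℤ) → A := fun u =>
    algebraMap k A (g.coeff u) * ∏ i ∈ I0, f i ^ (u i + N).toNat
  have hxpos (i : Fin m) (hi : i ∈ I0) : 0 < x (f i) :=
    (hx.1.nonneg _).lt_of_ne' ((hI0 i).2 hi)
  have hterm (u) (hu : u ∈ g.coeff.support) : x (term u) =
      Real.exp (-∑ i, (u i : ℝ) * -Real.log (x (f i))) * (∏ i ∈ I0, x (f i)) ^ N := by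
    have hsupp (i : Fin m) (hi : i ∉ I0) : u i = 0 := hg.1 u hu i hi
    rw [← hx.1.coe_toMulRingSeminorm, map_mul, map_prod_pow_toNat_add χ f
      (fun i hi => (hxpos i hi).ne') hsupp (hN u hu)]
    simp only [hx.1.coe_toMulRingSeminorm, hx.2 _ (Finsupp.mem_support_iff.1 hu), one_mul,
      mul_neg, Finset.sum_neg_distrib, neg_neg]
    rw [Real.exp_sum_intCast_mul_log _ _ _ fun i _ hui =>
      hxpos i (not_not.1 fun hi => hui (hsupp i hi))]
    rfl
  have hvan : x (∑ u ∈ g.coeff.support, term u) = 0 := by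
    refine apply_eq_zero_of_forall_stratum hx hgen hI0 fun φ hφ => ?_
    have hφterm (u) (hu : u ∈ g.coeff.support) : φ (term u) =
        (∏ i ∈ I0, φ (f i)) ^ N * (g.coeff u * ∏ i, φ (f i) ^ u i) := by
      rw [map_mul, map_prod_pow_toNat_add φ f (fun i hi => (hφ i).2 hi) (hg.1 u hu) (hN u hu),
        AlgHom.commutes, Algebra.algebraMap_self_apply]
      ring
    rw [map_sum, Finset.sum_congr rfl hφterm, ← Finset.mul_sum]
    exact mul_eq_zero_of_right _ (hg.2 φ hφ)
  have hsum : x (∑ u ∈ g.coeff.support, term u) = x (term u0) := by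
    refine (isNonarchimedean_of_mem_xanTriv hx).apply_sum_eq_of_lt
      (fun a => (hx.1.map_neg a).symm) hu0 fun u hu hne => ?_
    rw [hterm u hu, hterm u0 hu0]
    exact mul_lt_mul_of_pos_right (Real.exp_lt_exp.2 (neg_lt_neg (hlt u hu hne)))
      (pow_pos (Finset.prod_pos hxpos) N)
  have hpos : 0 < x (term u0) := by
    rw [hterm u0 hu0]
    exact mul_pos (Real.exp_pos _) (pow_pos (Finset.prod_pos hxpos) N)
  exact hpos.ne' (hsum.symm.trans hvan)

lemma negLog_mem_tropStrat [IsAlgClosed k] (hx : x ∈ XanTriv k A) {m : ℕ} {f : Fin m → A}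
    (hgen : Algebra.adjoin k (Set.range f) = ⊤) :
    (fun i => negLog (x (f i))) ∈ TropStrat k A f := by
  refine ⟨Finset.univ.filter fun i => x (f i) ≠ 0, fun i => -Real.log (x (f i)), ?_,
    fun g hg hg0 => minTwiceTriv_of_mem_stratVanishing hx hgen (by simp) hg hg0⟩
  funext i
  by_cases hi : x (f i) = 0 <;> simp [negLog, hi]

lemma apply_algebraMap_of_mem_xanTriv (hx : x ∈ XanTriv k A) (c : k) :
    x (algebraMap k A c) = expNeg (nuTriv k c) := by
  by_cases hc : c = 0
  · simp [hc, nuTriv, hx.1.map_zero]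
  · rw [hx.2 c hc, expNeg_nuTriv_of_ne_zero hc]

lemma negLog_eq_tropMap (hx : x ∈ XanTriv k A) {m n : ℕ} (f : Fin m → A) (f' : Fin n → A)
    (c : Fin n → k) (a : Fin n → Fin m → ℕ)
    (hrel : ∀ j, f' j = algebraMap k A (c j) * ∏ i, f i ^ a j i) :
    (fun j => negLog (x (f' j))) = tropMap (nuTriv k) c a fun i => negLog (x (f i)) := by
  funext j
  rw [tropMap, ← negLog_expNeg (_ + _), expNeg_add, expNeg_sum, hrel j,
    ← hx.1.coe_toMulRingSeminorm, map_mul, map_prod]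
  simp only [map_pow, expNeg_nsmul, hx.1.coe_toMulRingSeminorm, expNeg_negLog (hx.1.nonneg _),
    apply_algebraMap_of_mem_xanTriv hx]

lemma bigMapTriv_mem_limitSetTriv [IsAlgClosed k] (x : XanTriv k A) :
    bigMapTriv k A x ∈ limitSetTriv k A :=
  ⟨fun e => negLog_mem_tropStrat x.2 e.2.2,
    fun e e' c a hrel => negLog_eq_tropMap x.2 e.2.1 e'.2.1 c a hrel⟩

end XanTriv

section TropStrat

variable {k A : Type} [Field k] [CommRing A] [Algebra k A]

/-- Tropicalizing the relation `x₃ = x₁ + x₂`, through the Laurent polynomial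
`x₃ - x₁ - x₂` with the variables outside the stratum dropped. -/
lemma TropStrat.le_or_le_of_add_eq {m : ℕ} {f : Fin m → A} {v : Fin m → Rbar}
    (hv : v ∈ TropStrat k A f) {i₁ i₂ i₃ : Fin m} (h₁₂ : i₁ ≠ i₂) (h₁₃ : i₁ ≠ i₃)
    (h₂₃ : i₂ ≠ i₃) (hadd : f i₃ = f i₁ + f i₂) : v i₁ ≤ v i₃ ∨ v i₂ ≤ v i₃ := by
  obtain ⟨I0, w, rfl, hmin⟩ := hv
  by_cases h₃ : i₃ ∉ I0
  · simp [h₃]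
  rw [not_not] at h₃
  set δ : Fin m → Fin m → ℤ := fun j => Pi.single j 1
  have hδ : Function.Injective δ := fun a b h => by
    by_contra hne
    simpa [δ, hne] using congrFun h a
  set c : Fin m → k := fun j => if j ∈ I0 then 1 else 0
  set P : Laur k m := AddMonoidAlgebra.single (δ i₃) 1 + AddMonoidAlgebra.single (δ i₁) (-c i₁) +
    AddMonoidAlgebra.single (δ i₂) (-c i₂)
  have hsupp (u) (hu : u ∈ P.coeff.support) :
      u = δ i₃ ∨ ∃ j, (j = i₁ ∨ j = i₂) ∧ j ∈ I0 ∧ u = δ j := by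
    contrapose! hu
    simp only [P, c, AddMonoidAlgebra.coeff_add, AddMonoidAlgebra.coeff_single,
      Finsupp.mem_support_iff, Finsupp.add_apply, Finsupp.single_apply, not_not]
    have h₁ := hu.2 i₁ (.inl rfl)
    have h₂ := hu.2 i₂ (.inr rfl)
    split_ifs <;> grind
  have hP : P ∈ stratVanishing k A f I0 := by
    refine ⟨fun u hu i hi => ?_, fun φ hφ => ?_⟩
    · obtain rfl | ⟨j, -, hj, rfl⟩ := hsupp u hu
      · exact Pi.single_eq_of_ne (ne_of_mem_of_not_mem h₃ hi).symm _
      · exact Pi.single_eq_of_ne (ne_of_mem_of_not_mem hj hi).symm _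
    · have hcφ (j : Fin m) : c j * φ (f j) = φ (f j) := by
        by_cases hj : j ∈ I0
        · simp [c, hj]
        · simp [c, hj, not_not.1 ((hφ j).not.2 hj)]
      simp only [P, δ, lEval_add, lEval_single_pi_single, neg_mul, hcφ, hadd, map_add]
      ring
  have hP₃ : δ i₃ ∈ P.coeff.support := by
    simp [P, AddMonoidAlgebra.coeff_add, AddMonoidAlgebra.coeff_single, hδ.ne h₁₃, hδ.ne h₂₃]
  have hP₀ : P ≠ 0 := by
    rintro hP₀
    simp [hP₀] at hP₃
  obtain ⟨u, hu, hne, hle⟩ :=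
    (minTwiceTriv_iff_forall_exists_ne_le hP₀).1 (hmin P hP hP₀) _ hP₃
  obtain rfl | ⟨j, hj, hjI0, rfl⟩ := hsupp u hu
  · exact absurd rfl hne
  rw [sum_pi_single_mul, sum_pi_single_mul] at hle
  obtain rfl | rfl := hj
  · left; simpa [hjI0, h₃] using hle
  · right; simpa [hjI0, h₃] using hle

end TropStrat

namespace AffEmb

variable {k A : Type} [Field k] [CommRing A] [Algebra k A]

def append (e : AffEmb k A) {n : ℕ} (g : Fin n → A) : AffEmb k A :=
  ⟨e.1 + n, Fin.append e.2.1 g, eq_top_iff.2 <| e.2.2.symm.trans_le <| Algebra.adjoin_mono <| by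
    rintro _ ⟨i, rfl⟩
    exact ⟨Fin.castAdd n i, Fin.append_left _ _ _⟩⟩

@[simp] lemma append_castAdd (e : AffEmb k A) {n : ℕ} (g : Fin n → A) (i : Fin e.1) :
    (e.append g).2.1 (Fin.castAdd n i) = e.2.1 i :=
  Fin.append_left _ _ _

@[simp] lemma append_natAdd (e : AffEmb k A) {n : ℕ} (g : Fin n → A) (j : Fin n) :
    (e.append g).2.1 (Fin.natAdd e.1 j) = g j :=
  Fin.append_right _ _ _

lemma prod_append {M : Type*} [CommMonoid M] (e : AffEmb k A) {n : ℕ} (g : Fin n → A)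
    (F : Fin (e.append g).1 → M) :
    ∏ i, F i = (∏ i, F (Fin.castAdd n i)) * ∏ j, F (Fin.natAdd e.1 j) :=
  Fin.prod_univ_add F

def ofFiniteType (hfg : Algebra.FiniteType k A) : AffEmb k A :=
  ⟨hfg.out.choose.card, (↑) ∘ hfg.out.choose.equivFin.symm, by
    rw [Set.range_comp, Equiv.range_eq_univ, Set.image_univ, Subtype.range_coe]
    exact hfg.out.choose_spec⟩

end AffEmb

namespace limitSetTriv

variable {k A : Type} [Field k] [CommRing A] [Algebra k A] {y : ∀ e : AffEmb k A, Fin e.1 → Rbar}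

lemma apply_eq_of_comp (hy : y ∈ limitSetTriv k A) (E e : AffEmb k A) (σ : Fin e.1 → Fin E.1)
    (hσ : ∀ j, e.2.1 j = E.2.1 (σ j)) (j : Fin e.1) : y e j = y E (σ j) := by
  have h := congrFun (hy.2 E e (fun _ => 1) (fun j i => if i = σ j then 1 else 0) fun j => by
    simp [hσ, pow_ite]) j
  simpa [tropMap, nuTriv] using h

lemma apply_eq_of_coord_eq (hy : y ∈ limitSetTriv k A) {e e' : AffEmb k A} {i : Fin e.1}
    {i' : Fin e'.1} (h : e.2.1 i = e'.2.1 i') : y e i = y e' i' := by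
  set E := e.append e'.2.1
  set a : Fin E.1 := Fin.castAdd e'.1 i
  set b : Fin E.1 := Fin.natAdd e.1 i'
  have hE (j : Fin E.1) : E.2.1 j = E.2.1 (Equiv.swap a b j) := by
    rcases eq_or_ne j a with rfl | hja
    · rw [Equiv.swap_apply_left]
      simp [a, b, E, h]
    rcases eq_or_ne j b with rfl | hjb
    · rw [Equiv.swap_apply_right]
      simp [a, b, E, h]
    rw [Equiv.swap_apply_of_ne_of_ne hja hjb]
  calc y e i = y E a := apply_eq_of_comp hy E e _ (fun j => (e.append_castAdd _ j).symm) i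
    _ = y E b := by simpa using apply_eq_of_comp hy E E _ hE a
    _ = y e' i' := (apply_eq_of_comp hy E e' _ (fun j => (e.append_natAdd _ j).symm) i').symm

lemma apply_eq_of_eq_monomial (hy : y ∈ limitSetTriv k A) (e E : AffEmb k A) (j : Fin E.1)
    (c : k) (a : Fin e.1 → ℕ) (h : E.2.1 j = algebraMap k A c * ∏ i, e.2.1 i ^ a i) :
    y E j = nuTriv k c + ∑ i, a i • y e i := by
  set E' := e.append ![E.2.1 j]
  have hrel : ∀ j', E'.2.1 j' = algebraMap k A (Fin.append (fun _ => 1) ![c] j') *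
      ∏ i, e.2.1 i ^ Fin.append (fun j i => if i = j then 1 else 0) ![a] j' i := by
    refine Fin.addCases (fun i => ?_) (fun l => ?_)
    · simp [E', pow_ite]
    · simp [E', Fin.fin_one_eq_zero l, h]
  have hj : E.2.1 j = E'.2.1 (Fin.natAdd e.1 0) := by simp [E']
  rw [apply_eq_of_coord_eq hy hj, hy.2 e E' _ _ hrel]
  simp [tropMap]

end limitSetTriv

section Reconstruction

variable {k A : Type} [Field k] [CommRing A] [Algebra k A]

def seminormOfFamily (hfg : Algebra.FiniteType k A) (y : ∀ e : AffEmb k A, Fin e.1 → Rbar)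
    (f : A) : ℝ :=
  expNeg (y ((AffEmb.ofFiniteType hfg).append ![f]) (Fin.natAdd _ 0))

lemma continuous_seminormOfFamily (hfg : Algebra.FiniteType k A) :
    Continuous (seminormOfFamily (k := k) (A := A) hfg) :=
  continuous_pi fun _ =>
    continuous_induced_dom.comp ((continuous_apply _).comp (continuous_apply _))

lemma seminormOfFamily_bigMapTriv (hfg : Algebra.FiniteType k A) (x : XanTriv k A) :
    seminormOfFamily hfg (bigMapTriv k A x) = x.1 := by
  funext f
  simp [seminormOfFamily, bigMapTriv, piIotaTriv, expNeg_negLog (x.2.1.nonneg _)]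

lemma continuous_bigMapTriv :
    Continuous (bigMapTriv k A) := by
  refine continuous_pi fun e => continuous_pi fun i => continuous_induced_rng.2 ?_
  have h : (fun x : XanTriv k A => expNeg (bigMapTriv k A x e i)) = fun x => x.1 (e.2.1 i) :=
    funext fun x => expNeg_negLog (x.2.1.nonneg _)
  simpa only [Function.comp_def, h] using (continuous_apply _).comp continuous_subtype_val

variable {y : ∀ e : AffEmb k A, Fin e.1 → Rbar}

lemma seminormOfFamily_eq (hfg : Algebra.FiniteType k A) (hy : y ∈ limitSetTriv k A)
    (e : AffEmb k A) (j : Fin e.1) : seminormOfFamily hfg y (e.2.1 j) = expNeg (y e j) :=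
  congrArg expNeg (limitSetTriv.apply_eq_of_coord_eq hy (by simp))

lemma seminormOfFamily_algebraMap_mul_prod (hfg : Algebra.FiniteType k A)
    (hy : y ∈ limitSetTriv k A) (c : k) {n : ℕ} (g : Fin n → A) (b : Fin n → ℕ) :
    seminormOfFamily hfg y (algebraMap k A c * ∏ l, g l ^ b l) =
      expNeg (nuTriv k c) * ∏ l, seminormOfFamily hfg y (g l) ^ b l := by
  set e := (AffEmb.ofFiniteType hfg).append g
  have hmono : ((AffEmb.ofFiniteType hfg).append ![algebraMap k A c * ∏ l, g l ^ b l]).2.1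
      (Fin.natAdd _ 0) = algebraMap k A c * ∏ i, e.2.1 i ^ Fin.append 0 b i := by
    rw [AffEmb.prod_append]
    simp [e]
  rw [seminormOfFamily, limitSetTriv.apply_eq_of_eq_monomial hy e _ _ c _ hmono, expNeg_add,
    expNeg_sum, AffEmb.prod_append]
  simp only [e, Fin.append_left, Fin.append_right, Pi.zero_apply, zero_smul, expNeg_zero,
    Finset.prod_const_one, one_mul, expNeg_nsmul]
  refine congrArg _ (Finset.prod_congr rfl fun l _ => ?_)
  have hl := seminormOfFamily_eq hfg hy e (Fin.natAdd _ l)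
  rw [AffEmb.append_natAdd] at hl
  rw [hl]

lemma seminormOfFamily_add_le (hfg : Algebra.FiniteType k A) (hy : y ∈ limitSetTriv k A)
    (F G : A) :
    seminormOfFamily hfg y (F + G) ≤ seminormOfFamily hfg y F + seminormOfFamily hfg y G := by
  set e := (AffEmb.ofFiniteType hfg).append ![F, G, F + G]
  have hcoord (l : Fin 3) := seminormOfFamily_eq hfg hy e (Fin.natAdd _ l)
  have hF := hcoord 0
  have hG := hcoord 1
  have hFG := hcoord 2
  rw [AffEmb.append_natAdd] at hF hG hFG
  simp only [Matrix.cons_val] at hF hG hFG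
  rcases TropStrat.le_or_le_of_add_eq (hy.1 e) (i₁ := Fin.natAdd _ 0) (i₂ := Fin.natAdd _ 1)
    (i₃ := Fin.natAdd _ 2) ((Fin.natAdd_inj _).not.2 (by decide))
    ((Fin.natAdd_inj _).not.2 (by decide)) ((Fin.natAdd_inj _).not.2 (by decide))
    (by rw [AffEmb.append_natAdd, AffEmb.append_natAdd, AffEmb.append_natAdd]; rfl) with h | h
  · calc seminormOfFamily hfg y (F + G) ≤ seminormOfFamily hfg y F := by
          rw [hF, hFG]; exact expNeg_antitone h
      _ ≤ _ := le_add_of_nonneg_right (hG ▸ expNeg_nonneg _)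
  · calc seminormOfFamily hfg y (F + G) ≤ seminormOfFamily hfg y G := by
          rw [hG, hFG]; exact expNeg_antitone h
      _ ≤ _ := le_add_of_nonneg_left (hF ▸ expNeg_nonneg _)

lemma seminormOfFamily_mem_xanTriv (hfg : Algebra.FiniteType k A) (hy : y ∈ limitSetTriv k A) :
    seminormOfFamily hfg y ∈ XanTriv k A := by
  have hmono := seminormOfFamily_algebraMap_mul_prod hfg hy
  have hscalar (c : k) : seminormOfFamily hfg y (algebraMap k A c) = expNeg (nuTriv k c) := by
    simpa using hmono c Fin.elim0 Fin.elim0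
  refine ⟨⟨fun _ => expNeg_nonneg _, ?_, ?_, fun F G => ?_, seminormOfFamily_add_le hfg hy⟩,
    fun c hc => ?_⟩
  · simpa [nuTriv] using hscalar 0
  · simpa [nuTriv] using hscalar 1
  · simpa [Fin.prod_univ_two, nuTriv] using hmono 1 ![F, G] ![1, 1]
  · rw [hscalar, expNeg_nuTriv_of_ne_zero hc]

lemma bigMapTriv_seminormOfFamily (hfg : Algebra.FiniteType k A) (hy : y ∈ limitSetTriv k A) :
    bigMapTriv k A ⟨_, seminormOfFamily_mem_xanTriv hfg hy⟩ = y := by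
  funext e j
  simp [bigMapTriv, piIotaTriv, seminormOfFamily_eq hfg hy, negLog_expNeg]

end Reconstruction

theorem stmt11_general {k A : Type} [Field k] [IsAlgClosed k] [CommRing A]
    [Algebra k A] (hfg : Algebra.FiniteType k A) :
    Topology.IsEmbedding (bigMapTriv k A) ∧
      Set.range (bigMapTriv k A) = limitSetTriv k A := by
  have hleft : seminormOfFamily hfg ∘ bigMapTriv k A = Subtype.val :=
    funext (seminormOfFamily_bigMapTriv hfg)
  refine ⟨.of_comp continuous_bigMapTriv (continuous_seminormOfFamily hfg)
    (hleft ▸ .subtypeVal), ?_⟩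
  exact (Set.range_subset_iff.2 bigMapTriv_mem_limitSetTriv).antisymm fun y hy =>
    ⟨_, bigMapTriv_seminormOfFamily hfg hy⟩

/-- Theorem 5.1, affine case, trivial valuation.  Over an
algebraically closed trivially valued field `k`, for an affine variety `X = Spec A`, the
map `varprojlim π_ι` is a homeomorphism from `X^an` onto `varprojlim Trop(X, ι)`: the map
`x ↦ (π_ι(x))_ι` is a topological embedding whose image is exactly the set of families
`(y_ι)` with `y_ι ∈ Trop(X, ι)` (the stratified extended tropicalization, defined via the
trivial-valuation initial-form criterion) for every affine embedding `ι`, compatible with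
the transition maps `Trop(φ)` for all equivariant morphisms `φ` commuting with the
embeddings. -/
theorem stmt11 {k A : Type} [Field k] [IsAlgClosed k] [CommRing A] [IsDomain A]
    [Algebra k A] (hfg : Algebra.FiniteType k A) :
    Topology.IsEmbedding (bigMapTriv k A) ∧
      Set.range (bigMapTriv k A) = limitSetTriv k A :=
  stmt11_general hfg

end
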